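/- arXiv:1212.2931 — 2 statements merged into one kernel-verified Lean document; each statement's English description precedes it below -/
import Mathlib

section
/- Let K be a self-adjoint operator on a Hilbert space and S a unitary operator. If S maps the domain of K into itself and KS - SK = 2πS on the domain of K, then for all real σ, S e^{-iσK} = e^{2πiσ} e^{-iσK} S. -/
/-!
For `x, y ∈ D(K)` put `f σ = ⟪U σ y, S (U σ x)⟫`. Differentiating brings down `-iK` on both
sides; since `U σ` preserves `D(K)` and commutes with `K` (read off weakly, using `K = K†`) and
`K` is symmetric, the two terms combine into `i ⟪U σ y, (KS - SK) U σ x⟫ = 2πi f σ`.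
Hence `f σ = e^{2πiσ} f 0`, i.e. `U (-σ) S U σ = e^{2πiσ} S` weakly on the dense domain, and the
identity extends to all of `H` by continuity.
-/

open Complex
open scoped InnerProductSpace

theorem eq_cexp_mul_of_hasDerivAt_mul_self {f : ℝ → ℂ} {c : ℂ}
    (hf : ∀ t, HasDerivAt f (c * f t) t) (t : ℝ) : f t = exp (c * t) * f 0 := by
  have hconst : ∀ s, HasDerivAt (fun s : ℝ => exp (-c * s) * f s) 0 s := fun s => by
    have hexp : HasDerivAt (fun s : ℝ => exp (-c * s)) (exp (-c * s) * -c) s := by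
      simpa using ((hasDerivAt_id (s : ℂ)).const_mul (-c)).cexp.comp_ofReal
    exact (hexp.mul (hf s)).congr_deriv (by ring)
  have h := is_const_of_deriv_eq_zero (fun s => (hconst s).differentiableAt)
    (fun s => (hconst s).deriv) t 0
  simp only [ofReal_zero, mul_zero, exp_zero, one_mul] at h
  rw [← h, ← mul_assoc, ← exp_add]
  simp

theorem ContinuousLinearMap.hasDerivAt_comp {E F : Type*} [NormedAddCommGroup E]
    [NormedSpace ℂ E] [NormedAddCommGroup F] [NormedSpace ℂ F] (T : E →L[ℂ] F) {f : ℝ → E}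
    {f' : E} {t : ℝ} (hf : HasDerivAt f f' t) : HasDerivAt (fun s => T (f s)) (T f') t :=
  (T.restrictScalars ℝ).hasFDerivAt.comp_hasDerivAt t hf

section OneParameterGroup

variable {E : Type*} [NormedAddCommGroup E] [NormedSpace ℂ E] {U : ℝ → E →L[ℂ] E}

theorem apply_apply_neg_of_map_add (hU0 : U 0 = 1) (hUadd : ∀ σ τ, U (σ + τ) = (U σ).comp (U τ))
    (σ : ℝ) (w : E) : U σ (U (-σ) w) = w := by
  simpa [hU0] using (congrArg (· w) (hUadd σ (-σ))).symm

theorem hasDerivAt_apply_of_map_add (hUadd : ∀ σ τ, U (σ + τ) = (U σ).comp (U τ)) {z v : E}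
    (h : HasDerivAt (fun σ => U σ z) v 0) (σ₀ : ℝ) :
    HasDerivAt (fun σ => U σ z) (U σ₀ v) σ₀ := by
  have hshift : (fun σ => U σ z) = fun σ => U σ₀ (U (σ - σ₀) z) := by
    funext σ
    rw [← ContinuousLinearMap.comp_apply, ← hUadd, add_sub_cancel]
  rw [hshift]
  exact (U σ₀).hasDerivAt_comp (HasDerivAt.comp_sub_const σ₀ σ₀ (by simpa using h))

end OneParameterGroup

namespace LinearPMap

variable {H : Type*} [NormedAddCommGroup H] [InnerProductSpace ℂ H] [CompleteSpace H]
  {K : H →ₗ.[ℂ] H}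

theorem inner_map_eq_inner_map_of_isSelfAdjoint (hK : IsSelfAdjoint K) (u v : K.domain) :
    ⟪K u, v⟫_ℂ = ⟪(u : H), K v⟫_ℂ := by
  have h := adjoint_isFormalAdjoint hK.dense_domain
  rw [isSelfAdjoint_def.1 hK] at h
  exact h u v

theorem exists_mem_domain_apply_eq_of_isSelfAdjoint (hK : IsSelfAdjoint K) {u w : H}
    (h : ∀ v : K.domain, ⟪w, v⟫_ℂ = ⟪u, K v⟫_ℂ) : ∃ hu : u ∈ K.domain, K ⟨u, hu⟩ = w := by
  rw [← isSelfAdjoint_def.1 hK]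
  exact ⟨mem_adjoint_domain_of_exists u ⟨w, h⟩, adjoint_apply_eq hK.dense_domain _ h⟩

end LinearPMap

section UnitaryGroup

variable {H : Type*} [NormedAddCommGroup H] [InnerProductSpace ℂ H] [CompleteSpace H]

/-- `U σ = e^{-iσK}`: the generator of `U` extends `-iK`, which for self-adjoint `K` forces
equality. -/
structure IsUnitaryGroupGeneratedBy (U : ℝ → H →L[ℂ] H) (K : H →ₗ.[ℂ] H) : Prop where
  map_zero : U 0 = 1
  map_add : ∀ σ τ, U (σ + τ) = (U σ).comp (U τ)
  mem_unitary : ∀ σ, U σ ∈ unitary (H →L[ℂ] H)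
  hasDerivAt_zero : ∀ x (hx : x ∈ K.domain), HasDerivAt (fun σ => U σ x) (-I • K ⟨x, hx⟩) 0

namespace IsUnitaryGroupGeneratedBy

variable {U : ℝ → H →L[ℂ] H} {K : H →ₗ.[ℂ] H}

theorem inner_map_left (hU : IsUnitaryGroupGeneratedBy U K) (σ : ℝ) (a b : H) :
    ⟪U σ a, b⟫_ℂ = ⟪a, U (-σ) b⟫_ℂ := by
  have ha : U (-σ) (U σ a) = a := by
    simpa using apply_apply_neg_of_map_add hU.map_zero hU.map_add (-σ) a
  have h := (U (-σ)).inner_map_map_of_mem_unitary (hU.mem_unitary (-σ)) (U σ a) b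
  rw [ha] at h
  exact h.symm

theorem hasDerivAt (hU : IsUnitaryGroupGeneratedBy U K) {z : H} (hz : z ∈ K.domain) (σ : ℝ) :
    HasDerivAt (fun σ => U σ z) (U σ (-I • K ⟨z, hz⟩)) σ :=
  hasDerivAt_apply_of_map_add hU.map_add (hU.hasDerivAt_zero z hz) σ

theorem exists_mem_domain_map_eq (hU : IsUnitaryGroupGeneratedBy U K)
    (hK : IsSelfAdjoint K) {z : H} (hz : z ∈ K.domain) (σ : ℝ) :
    ∃ h : U σ z ∈ K.domain, K ⟨U σ z, h⟩ = U σ (K ⟨z, hz⟩) := by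
  refine K.exists_mem_domain_apply_eq_of_isSelfAdjoint hK fun v => ?_
  -- both sides come from the derivative at `σ` of `t ↦ ⟪U t z, v⟫ = ⟪z, U (-t) v⟫`
  have hforward := (hU.hasDerivAt hz σ).inner ℂ (hasDerivAt_const σ (v : H))
  have hbackward := (hasDerivAt_const σ z).inner ℂ
    ((hU.hasDerivAt v.2 (-σ)).scomp σ (hasDerivAt_neg σ))
  have h := hforward.unique (hbackward.congr_of_eventuallyEq
    (Filter.Eventually.of_forall fun t => hU.inner_map_left t z v))
  simp only [inner_zero_right, inner_zero_left, zero_add, add_zero, Function.comp_apply,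
    Subtype.coe_eta, _root_.map_zero, map_neg, map_smul, neg_smul, smul_neg, one_smul, neg_neg,
    inner_neg_left, inner_smul_left, inner_smul_right, conj_I, neg_mul, ← hU.inner_map_left] at h
  exact mul_left_cancel₀ I_ne_zero h

end IsUnitaryGroupGeneratedBy

end UnitaryGroup

section Commutation

variable {H : Type*} [NormedAddCommGroup H] [InnerProductSpace ℂ H] [CompleteSpace H]
  {U : ℝ → H →L[ℂ] H} {K : H →ₗ.[ℂ] H}

theorem inner_map_map_eq_cexp_mul (hU : IsUnitaryGroupGeneratedBy U K) (hK : IsSelfAdjoint K)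
    (S : H →L[ℂ] H) (hdom : ∀ x, x ∈ K.domain → S x ∈ K.domain) (c : ℂ)
    (hcomm : ∀ x (hx : x ∈ K.domain), K ⟨S x, hdom x hx⟩ - S (K ⟨x, hx⟩) = c • S x)
    {x y : H} (hx : x ∈ K.domain) (hy : y ∈ K.domain) (σ : ℝ) :
    ⟪U σ y, S (U σ x)⟫_ℂ = exp (I * c * σ) * ⟪y, S x⟫_ℂ := by
  set f : ℝ → ℂ := fun σ => ⟪U σ y, S (U σ x)⟫_ℂ
  have hf : ∀ σ, HasDerivAt f (I * c * f σ) σ := fun σ => by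
    obtain ⟨hx', hKx⟩ := hU.exists_mem_domain_map_eq hK hx σ
    obtain ⟨hy', hKy⟩ := hU.exists_mem_domain_map_eq hK hy σ
    refine ((hU.hasDerivAt hy σ).inner ℂ (S.hasDerivAt_comp (hU.hasDerivAt hx σ))).congr_deriv ?_
    rw [map_smul, map_smul, map_smul, ← hKx, ← hKy, inner_smul_left, inner_smul_right,
      K.inner_map_eq_inner_map_of_isSelfAdjoint hK ⟨U σ y, hy'⟩ ⟨S (U σ x), hdom _ hx'⟩,
      eq_add_of_sub_eq (hcomm _ hx'), inner_add_right, inner_smul_right]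
    simp only [map_neg, conj_I, neg_neg, f]
    ring
  have hf0 : f 0 = ⟪y, S x⟫_ℂ := by simp [f, hU.map_zero]
  rw [← hf0]
  exact eq_cexp_mul_of_hasDerivAt_mul_self hf σ

theorem map_map_eq_cexp_smul (hU : IsUnitaryGroupGeneratedBy U K) (hK : IsSelfAdjoint K)
    (S : H →L[ℂ] H) (hdom : ∀ x, x ∈ K.domain → S x ∈ K.domain) (c : ℂ)
    (hcomm : ∀ x (hx : x ∈ K.domain), K ⟨S x, hdom x hx⟩ - S (K ⟨x, hx⟩) = c • S x)
    (σ : ℝ) (x : H) : S (U σ x) = exp (I * c * σ) • U σ (S x) := by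
  have hdomain : ∀ z ∈ K.domain, S (U σ z) = exp (I * c * σ) • U σ (S z) := fun z hz => by
    have h : U (-σ) (S (U σ z)) = exp (I * c * σ) • S z :=
      hK.dense_domain.eq_of_inner_right (𝕜 := ℂ) fun v hv => by
        rw [← hU.inner_map_left, inner_smul_right,
          inner_map_map_eq_cexp_mul hU hK S hdom c hcomm hz hv]
    rw [← map_smul, ← h, apply_apply_neg_of_map_add hU.map_zero hU.map_add]
  exact congrFun (Continuous.ext_on hK.dense_domain (by fun_prop) (by fun_prop) hdomain) x

end Commutation

theorem stmt_2_general {H : Type*} [NormedAddCommGroup H] [InnerProductSpace ℂ H] [CompleteSpace H]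
    (K : H →ₗ.[ℂ] H) (hself : K.adjoint = K)
    (S : H →L[ℂ] H)
    (hdom : ∀ x, x ∈ K.domain → S x ∈ K.domain)
    (hcomm : ∀ x (hx : x ∈ K.domain),
      K ⟨S x, hdom x hx⟩ - S (K ⟨x, hx⟩) = ((2 * Real.pi : ℝ) : ℂ) • S x)
    -- `U σ = e^{-iσK}`, the strongly continuous unitary group generated by `K`:
    (U : ℝ → H →L[ℂ] H)
    (hU0 : U 0 = 1)
    (hUadd : ∀ σ τ : ℝ, U (σ + τ) = (U σ).comp (U τ))
    (hUunit : ∀ σ : ℝ, U σ ∈ unitary (H →L[ℂ] H))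
    (hUgen : ∀ x (hx : x ∈ K.domain),
      HasDerivAt (fun σ : ℝ => U σ x) (-Complex.I • K ⟨x, hx⟩) 0) :
    ∀ (σ : ℝ) (x : H),
      S (U σ x) = Complex.exp (2 * Real.pi * Complex.I * σ) • U σ (S x) := by
  intro σ x
  rw [map_map_eq_cexp_smul ⟨hU0, hUadd, hUunit, hUgen⟩ hself S hdom _ hcomm σ x]
  congr 2
  push_cast
  ring

/-- Let `K` be a self-adjoint operator and `S` a unitary operator with
`S D(K) ⊆ D(K)` and `KS - SK = 2πS` on `D(K)`.  Then for all real `σ`,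
`S e^{-iσK} = e^{2πiσ} e^{-iσK} S`. -/
theorem stmt_2 {H : Type*} [NormedAddCommGroup H] [InnerProductSpace ℂ H] [CompleteSpace H]
    (K : H →ₗ.[ℂ] H) (hdense : Dense (K.domain : Set H)) (hself : K.adjoint = K)
    (S : H →L[ℂ] H) (hS : S ∈ unitary (H →L[ℂ] H))
    (hdom : ∀ x, x ∈ K.domain → S x ∈ K.domain)
    (hcomm : ∀ x (hx : x ∈ K.domain),
      K ⟨S x, hdom x hx⟩ - S (K ⟨x, hx⟩) = ((2 * Real.pi : ℝ) : ℂ) • S x)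
    -- `U σ = e^{-iσK}`, the strongly continuous unitary group generated by `K`:
    (U : ℝ → H →L[ℂ] H)
    (hU0 : U 0 = 1)
    (hUadd : ∀ σ τ : ℝ, U (σ + τ) = (U σ).comp (U τ))
    (hUunit : ∀ σ : ℝ, U σ ∈ unitary (H →L[ℂ] H))
    (hUcont : ∀ x : H, Continuous fun σ : ℝ => U σ x)
    (hUgen : ∀ x (hx : x ∈ K.domain),
      HasDerivAt (fun σ : ℝ => U σ x) (-Complex.I • K ⟨x, hx⟩) 0) :
    ∀ (σ : ℝ) (x : H),
      S (U σ x) = Complex.exp (2 * Real.pi * Complex.I * σ) • U σ (S x) :=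
  stmt_2_general K hself S hdom hcomm U hU0 hUadd hUunit hUgen
end

section
/- Let K be self-adjoint and S unitary on a Hilbert space. Then the identity S e^{-iσK} = e^{2πiσ} e^{-iσK} S for all real σ holds if and only if the resolvent R(ζ) = (K - ζ)⁻¹ satisfies S R(ζ) = R(ζ + 2π) S for all non-real ζ. -/
/-!
Both relations are equivalent to the infinitesimal one `K S = S (K + 2π)` on the domain of `K`.
For the resolvent this is algebra: apply `S` to `(K - ζ) R(ζ) = 1` and invert `K - (ζ + 2π)`.
For the group, differentiating at `σ = 0` gives it, self-adjointness of `K` guaranteeing that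
`S` maps the domain into itself. Conversely `g(τ) = e^{iτK} S e^{-iτK} x` solves
`g' = 2πi g` for `x` in the domain, hence `g(τ) = e^{2πiτ} S x`, and density of the domain
does the rest.
-/

open Complex Asymptotics Filter Topology

section Calculus

variable {E F : Type*} [NormedAddCommGroup E] [NormedSpace ℂ E]
  [NormedAddCommGroup F] [NormedSpace ℂ F]

/-- Unlike `HasDerivAt.clm_apply`, `A` need only be bounded and strongly continuous. -/
theorem HasDerivAt.clm_apply_of_bounded {A : ℝ → E →L[ℂ] F} {f : ℝ → E} {f' : E} {v : F}
    {t C : ℝ} (hbound : ∀ ε w, ‖A ε w‖ ≤ C * ‖w‖) (hcont : ContinuousAt (fun ε => A ε f') t)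
    (hf : HasDerivAt f f' t) (hA : HasDerivAt (fun ε => A ε (f t)) v t) :
    HasDerivAt (fun ε => A ε (f ε)) (A t f' + v) t := by
  rw [hasDerivAt_iff_isLittleO] at hf hA ⊢
  have h₁ : (fun ε => A ε (f ε - f t - (ε - t) • f')) =o[𝓝 t] fun ε => ε - t :=
    (IsBigO.of_bound C (Eventually.of_forall fun ε => hbound ε _)).trans_isLittleO hf
  have h₂ : (fun ε => (ε - t) • (A ε f' - A t f')) =o[𝓝 t] fun ε => ε - t := by
    have hlim : Tendsto (fun ε => A ε f' - A t f') (𝓝 t) (𝓝 0) :=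
      tendsto_sub_nhds_zero_iff.mpr hcont
    simpa using (isBigO_refl (fun ε => ε - t) (𝓝 t)).smul_isLittleO
      ((isLittleO_one_iff ℝ).mpr hlim)
  refine ((h₁.add h₂).add hA).congr_left fun ε => ?_
  simp only [map_sub, ContinuousLinearMap.map_smul_of_tower, smul_sub, smul_add]
  abel

theorem hasDerivAt_exp_mul_ofReal (c : ℂ) (t : ℝ) :
    HasDerivAt (fun s : ℝ => exp (c * s)) (exp (c * t) * c) t := by
  simpa using ((hasDerivAt_id (t : ℂ)).const_mul c).cexp.comp_ofReal

theorem eq_exp_mul_smul_of_hasDerivAt {g : ℝ → E} {c : ℂ}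
    (hg : ∀ t, HasDerivAt g (c • g t) t) (t : ℝ) : g t = exp (c * t) • g 0 := by
  have hconst : ∀ t : ℝ, HasDerivAt (fun s : ℝ => exp (-c * s) • g s) 0 t := fun t => by
    refine ((hasDerivAt_exp_mul_ofReal (-c) t).smul (hg t)).congr_deriv ?_
    rw [smul_smul, ← add_smul, mul_neg, add_neg_cancel, zero_smul]
  have := is_const_of_deriv_eq_zero (fun s => (hconst s).differentiableAt)
    (fun s => (hconst s).deriv) t 0
  simp only [ofReal_zero, mul_zero, exp_zero, one_smul] at this
  rw [← this, smul_smul, ← exp_add, ← add_mul, add_neg_cancel, zero_mul, exp_zero, one_smul]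

end Calculus

section Intertwining

variable {E : Type*} [NormedAddCommGroup E] [NormedSpace ℂ E]

/-- `K S = S (K + a)` on the domain of `K`: the infinitesimal form of
`S e^{-iσK} = e^{iaσ} e^{-iσK} S`. -/
def IntertwinesWithShift (K : E →ₗ.[ℂ] E) (S : E →L[ℂ] E) (a : ℂ) : Prop :=
  ∀ z (hz : z ∈ K.domain), ∃ h : S z ∈ K.domain, K ⟨S z, h⟩ = S (K ⟨z, hz⟩) + a • S z

variable {K : E →ₗ.[ℂ] E} {S : E →L[ℂ] E} {a ζ : ℂ} {R : ℂ → E →L[ℂ] E}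

theorem IntertwinesWithShift.apply_resolvent (hS : IntertwinesWithShift K S a)
    (hR : ∀ x : E, ∃ h : R ζ x ∈ K.domain, K ⟨R ζ x, h⟩ - ζ • R ζ x = x)
    (hR' : ∀ x (hx : x ∈ K.domain), R (ζ + a) (K ⟨x, hx⟩ - (ζ + a) • x) = x) (x : E) :
    S (R ζ x) = R (ζ + a) (S x) := by
  obtain ⟨hm, hv⟩ := hR x
  obtain ⟨hSm, hKSm⟩ := hS _ hm
  rw [← hR' _ hSm, hKSm]
  congr 1
  conv_rhs => rw [← hv, map_sub, map_smul]
  module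

theorem intertwinesWithShift_of_apply_resolvent
    (hR : ∀ x : E, ∃ h : R (ζ + a) x ∈ K.domain, K ⟨R (ζ + a) x, h⟩ - (ζ + a) • R (ζ + a) x = x)
    (hR' : ∀ x (hx : x ∈ K.domain), R ζ (K ⟨x, hx⟩ - ζ • x) = x)
    (hres : ∀ x : E, S (R ζ x) = R (ζ + a) (S x)) :
    IntertwinesWithShift K S a := by
  intro z hz
  obtain ⟨hm, hv⟩ := hR (S (K ⟨z, hz⟩ - ζ • z))
  have hSz : R (ζ + a) (S (K ⟨z, hz⟩ - ζ • z)) = S z := by rw [← hres, hR']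
  refine ⟨hSz ▸ hm, ?_⟩
  rw [show (⟨S z, hSz ▸ hm⟩ : K.domain) = ⟨_, hm⟩ from Subtype.ext hSz.symm,
    eq_add_of_sub_eq hv, hSz, map_sub, map_smul]
  module

end Intertwining

section UnitaryGroup

variable {H : Type*} [NormedAddCommGroup H] [InnerProductSpace ℂ H] [CompleteSpace H]

/-- `U σ = e^{-iσK}`: a strongly continuous unitary group whose generator extends `-iK`. -/
structure IsUnitaryGroupGeneratedBy_s3 (U : ℝ → H →L[ℂ] H) (K : H →ₗ.[ℂ] H) : Prop where
  map_zero : U 0 = 1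
  map_add : ∀ σ τ : ℝ, U (σ + τ) = (U σ).comp (U τ)
  mem_unitary : ∀ σ : ℝ, U σ ∈ unitary (H →L[ℂ] H)
  continuous_apply : ∀ x : H, Continuous fun σ : ℝ => U σ x
  hasDerivAt_zero : ∀ x (hx : x ∈ K.domain),
    HasDerivAt (fun σ : ℝ => U σ x) (-I • K ⟨x, hx⟩) 0

namespace IsUnitaryGroupGeneratedBy_s3

variable {U : ℝ → H →L[ℂ] H} {K : H →ₗ.[ℂ] H}

theorem apply_apply (hU : IsUnitaryGroupGeneratedBy_s3 U K) (σ τ : ℝ) (x : H) :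
    U σ (U τ x) = U (σ + τ) x := by
  rw [hU.map_add]; rfl

theorem mul_neg_eq_one (hU : IsUnitaryGroupGeneratedBy_s3 U K) (σ : ℝ) : U σ * U (-σ) = 1 := by
  rw [ContinuousLinearMap.mul_def, ← hU.map_add, add_neg_cancel, hU.map_zero]

theorem star_eq (hU : IsUnitaryGroupGeneratedBy_s3 U K) (σ : ℝ) : star (U σ) = U (-σ) :=
  left_inv_eq_right_inv (Unitary.star_mul_self_of_mem (hU.mem_unitary σ)) (hU.mul_neg_eq_one σ)

theorem norm_apply (hU : IsUnitaryGroupGeneratedBy_s3 U K) (σ : ℝ) (x : H) : ‖U σ x‖ = ‖x‖ :=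
  ContinuousLinearMap.norm_map_of_mem_unitary (hU.mem_unitary σ) x

theorem inner_apply_neg (hU : IsUnitaryGroupGeneratedBy_s3 U K) (σ : ℝ) (u y : H) :
    inner ℂ (U (-σ) u) y = inner ℂ u (U σ y) := by
  rw [← hU.star_eq, ContinuousLinearMap.star_eq_adjoint, ContinuousLinearMap.adjoint_inner_left]

theorem hasDerivAt_apply (hU : IsUnitaryGroupGeneratedBy_s3 U K) {x : H} (hx : x ∈ K.domain)
    (t : ℝ) : HasDerivAt (fun σ : ℝ => U σ x) (U t (-I • K ⟨x, hx⟩)) t := by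
  have h₀ := ((U t).restrictScalars ℝ).hasFDerivAt.comp_hasDerivAt 0 (hU.hasDerivAt_zero x hx)
  have := h₀.scomp_of_eq t ((hasDerivAt_id t).sub_const t) (sub_self t).symm
  rw [one_smul] at this
  refine this.congr_of_eventuallyEq (Eventually.of_forall fun σ => ?_)
  simp [hU.apply_apply]

theorem hasDerivAt_neg_apply (hU : IsUnitaryGroupGeneratedBy_s3 U K) {x : H} (hx : x ∈ K.domain)
    (t : ℝ) : HasDerivAt (fun σ : ℝ => U (-σ) x) (U (-t) (I • K ⟨x, hx⟩)) t := by
  simpa [Function.comp_def] using (hU.hasDerivAt_apply hx (-t)).scomp_of_eq t (hasDerivAt_neg t) rfl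

/-- Self-adjointness of `K` makes it the full generator: a vector at which `σ ↦ U σ y` is
differentiable lies in the domain of `K`. -/
theorem exists_mem_domain_of_hasDerivAt (hU : IsUnitaryGroupGeneratedBy_s3 U K)
    (hdense : Dense (K.domain : Set H)) (hself : K.adjoint = K) {y v : H}
    (hd : HasDerivAt (fun σ : ℝ => U σ y) v 0) :
    ∃ h : y ∈ K.domain, K ⟨y, h⟩ = I • v := by
  have key : ∀ u : K.domain, inner ℂ (I • v) (u : H) = inner ℂ y (K u) := by
    intro u
    have hu : HasDerivAt (fun σ : ℝ => inner ℂ (U (-σ) u) y) (inner ℂ (I • K u) y) 0 := by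
      simpa only [inner_zero_right, zero_add, neg_zero, hU.map_zero, one_apply_eq_self] using
        (hU.hasDerivAt_neg_apply u.2 0).inner ℂ (hasDerivAt_const 0 y)
    have hv : HasDerivAt (fun σ : ℝ => inner ℂ (U (-σ) u) y) (inner ℂ (u : H) v) 0 := by
      simpa only [hU.inner_apply_neg, hU.map_zero, one_apply_eq_self, inner_zero_left,
        add_zero] using (hasDerivAt_const 0 (u : H)).inner ℂ hd
    have huv : inner ℂ (u : H) v = inner ℂ (I • K u) y := hv.unique hu
    rw [inner_smul_left, ← inner_conj_symm, huv, inner_conj_symm, inner_smul_right, conj_I,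
      ← mul_assoc, neg_mul, I_mul_I, neg_neg, one_mul]
  rw [← hself]
  have hmem : y ∈ K.adjoint.domain := LinearPMap.mem_adjoint_domain_of_exists y ⟨I • v, key⟩
  exact ⟨hmem, K.adjoint_apply_eq hdense ⟨y, hmem⟩ key⟩

theorem exists_mem_domain_apply (hU : IsUnitaryGroupGeneratedBy_s3 U K)
    (hdense : Dense (K.domain : Set H)) (hself : K.adjoint = K) {x : H} (hx : x ∈ K.domain)
    (t : ℝ) : ∃ h : U t x ∈ K.domain, K ⟨U t x, h⟩ = U t (K ⟨x, hx⟩) := by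
  have hd : HasDerivAt (fun σ : ℝ => U σ (U t x)) (U t (-I • K ⟨x, hx⟩)) 0 := by
    simpa [hU.apply_apply] using (hU.hasDerivAt_apply hx (0 + t)).comp_add_const 0 t
  obtain ⟨h, hK⟩ := hU.exists_mem_domain_of_hasDerivAt hdense hself hd
  refine ⟨h, ?_⟩
  rw [hK, map_smul, smul_smul, mul_neg, I_mul_I, neg_neg, one_smul]

variable {S : H →L[ℂ] H} {a : ℂ}

theorem intertwinesWithShift_of_forall_apply (hU : IsUnitaryGroupGeneratedBy_s3 U K)
    (hdense : Dense (K.domain : Set H)) (hself : K.adjoint = K)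
    (h : ∀ (σ : ℝ) (x : H), S (U σ x) = exp (a * I * σ) • U σ (S x)) :
    IntertwinesWithShift K S a := by
  intro z hz
  have hrel : (fun σ : ℝ => U σ (S z)) = fun σ : ℝ => exp (-a * I * σ) • S (U σ z) := by
    funext σ
    rw [h, smul_smul, ← exp_add, ← add_mul, neg_mul, neg_add_cancel, zero_mul, exp_zero,
      one_smul]
  have hd : HasDerivAt (fun σ : ℝ => U σ (S z)) (S (-I • K ⟨z, hz⟩) + (-a * I) • S z) 0 := by
    rw [hrel]
    refine ((hasDerivAt_exp_mul_ofReal (-a * I) 0).smul ((S.restrictScalars ℝ).hasFDerivAt.comp_hasDerivAt 0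
      (hU.hasDerivAt_zero z hz))).congr_deriv ?_
    simp [hU.map_zero]
  obtain ⟨hm, hK⟩ := hU.exists_mem_domain_of_hasDerivAt hdense hself hd
  refine ⟨hm, ?_⟩
  rw [hK, map_smul]
  linear_combination (norm := module) I_mul_I • (-(S (K ⟨z, hz⟩) + a • S z))

theorem hasDerivAt_conj (hU : IsUnitaryGroupGeneratedBy_s3 U K)
    (hdense : Dense (K.domain : Set H)) (hself : K.adjoint = K) (hS : IntertwinesWithShift K S a)
    {x : H} (hx : x ∈ K.domain) (t : ℝ) :
    HasDerivAt (fun τ : ℝ => U (-τ) (S (U τ x))) ((a * I) • U (-t) (S (U t x))) t := by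
  obtain ⟨hz, hKz⟩ := hU.exists_mem_domain_apply hdense hself hx t
  obtain ⟨hSz, hKSz⟩ := hS _ hz
  have hbound : ∀ ε (w : H), ‖((U (-ε)).comp S) w‖ ≤ ‖S‖ * ‖w‖ := fun ε w => by
    rw [ContinuousLinearMap.comp_apply, hU.norm_apply]
    exact S.le_opNorm w
  have := HasDerivAt.clm_apply_of_bounded hbound
    ((hU.continuous_apply _).comp continuous_neg).continuousAt (hU.hasDerivAt_apply hx t)
    (hU.hasDerivAt_neg_apply hSz t)
  refine this.congr_deriv ?_
  simp only [ContinuousLinearMap.comp_apply, hKSz, hKz, map_smul, ContinuousLinearMap.map_add]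
  module

theorem apply_eq_exp_smul_of_mem_domain (hU : IsUnitaryGroupGeneratedBy_s3 U K)
    (hdense : Dense (K.domain : Set H)) (hself : K.adjoint = K) (hS : IntertwinesWithShift K S a)
    {x : H} (hx : x ∈ K.domain) (σ : ℝ) :
    S (U σ x) = exp (a * I * σ) • U σ (S x) := by
  have hg := eq_exp_mul_smul_of_hasDerivAt (hU.hasDerivAt_conj hdense hself hS hx) σ
  simp only [neg_zero, hU.map_zero, one_apply_eq_self] at hg
  rw [← map_smul, ← hg, hU.apply_apply, add_neg_cancel, hU.map_zero, one_apply_eq_self]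

theorem forall_apply_eq_exp_smul_iff (hU : IsUnitaryGroupGeneratedBy_s3 U K)
    (hdense : Dense (K.domain : Set H)) (hself : K.adjoint = K) :
    (∀ (σ : ℝ) (x : H), S (U σ x) = exp (a * I * σ) • U σ (S x)) ↔
      IntertwinesWithShift K S a := by
  refine ⟨hU.intertwinesWithShift_of_forall_apply hdense hself, fun hS σ x => ?_⟩
  have hcont : Continuous fun y : H => exp (a * I * σ) • U σ (S y) := by fun_prop
  exact congrFun (Continuous.ext_on hdense (by fun_prop) hcont
    fun y hy => hU.apply_eq_exp_smul_of_mem_domain hdense hself hS hy σ) x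

end IsUnitaryGroupGeneratedBy_s3

end UnitaryGroup

theorem stmt_3_general {H : Type*} [NormedAddCommGroup H] [InnerProductSpace ℂ H] [CompleteSpace H]
    (K : H →ₗ.[ℂ] H) (hdense : Dense (K.domain : Set H)) (hself : K.adjoint = K)
    (S : H →L[ℂ] H)
    -- `U σ = e^{-iσK}`, the strongly continuous unitary group generated by `K`:
    (U : ℝ → H →L[ℂ] H)
    (hU0 : U 0 = 1)
    (hUadd : ∀ σ τ : ℝ, U (σ + τ) = (U σ).comp (U τ))
    (hUunit : ∀ σ : ℝ, U σ ∈ unitary (H →L[ℂ] H))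
    (hUcont : ∀ x : H, Continuous fun σ : ℝ => U σ x)
    (hUgen : ∀ x (hx : x ∈ K.domain),
      HasDerivAt (fun σ : ℝ => U σ x) (-Complex.I • K ⟨x, hx⟩) 0)
    -- `R ζ = (K - ζ)⁻¹` for `Im ζ ≠ 0`:
    (R : ℂ → H →L[ℂ] H)
    (hR : ∀ ζ : ℂ, ζ.im ≠ 0 → ∀ x : H, ∃ h : R ζ x ∈ K.domain,
      K ⟨R ζ x, h⟩ - ζ • R ζ x = x)
    (hR' : ∀ ζ : ℂ, ζ.im ≠ 0 → ∀ x (hx : x ∈ K.domain),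
      R ζ (K ⟨x, hx⟩ - ζ • x) = x) :
    (∀ (σ : ℝ) (x : H),
        S (U σ x) = Complex.exp (2 * Real.pi * Complex.I * σ) • U σ (S x)) ↔
    (∀ ζ : ℂ, ζ.im ≠ 0 → ∀ x : H,
        S (R ζ x) = R (ζ + (2 * Real.pi : ℝ)) (S x)) := by
  have hU : IsUnitaryGroupGeneratedBy_s3 U K := ⟨hU0, hUadd, hUunit, hUcont, hUgen⟩
  have hgroup : (∀ (σ : ℝ) (x : H),
      S (U σ x) = Complex.exp (2 * Real.pi * Complex.I * σ) • U σ (S x)) ↔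
      IntertwinesWithShift K S (2 * Real.pi : ℝ) := by
    rw [← hU.forall_apply_eq_exp_smul_iff hdense hself]
    push_cast
    rfl
  rw [hgroup]
  refine ⟨fun hS ζ hζ => hS.apply_resolvent (hR ζ hζ) (hR' _ (by simpa using hζ)), fun hres => ?_⟩
  have hI : I.im ≠ 0 := by simp
  exact intertwinesWithShift_of_apply_resolvent (hR _ (by simp)) (hR' I hI) (hres I hI)

/-- Let `K` be self-adjoint and `S` unitary.  Then
`S e^{-iσK} = e^{2πiσ} e^{-iσK} S` for all real `σ` holds if and only if the resolvent
`R(ζ) = (K - ζ)⁻¹` satisfies `S R(ζ) = R(ζ + 2π) S` for all non-real `ζ`. -/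
theorem stmt_3 {H : Type*} [NormedAddCommGroup H] [InnerProductSpace ℂ H] [CompleteSpace H]
    (K : H →ₗ.[ℂ] H) (hdense : Dense (K.domain : Set H)) (hself : K.adjoint = K)
    (S : H →L[ℂ] H) (hS : S ∈ unitary (H →L[ℂ] H))
    -- `U σ = e^{-iσK}`, the strongly continuous unitary group generated by `K`:
    (U : ℝ → H →L[ℂ] H)
    (hU0 : U 0 = 1)
    (hUadd : ∀ σ τ : ℝ, U (σ + τ) = (U σ).comp (U τ))
    (hUunit : ∀ σ : ℝ, U σ ∈ unitary (H →L[ℂ] H))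
    (hUcont : ∀ x : H, Continuous fun σ : ℝ => U σ x)
    (hUgen : ∀ x (hx : x ∈ K.domain),
      HasDerivAt (fun σ : ℝ => U σ x) (-Complex.I • K ⟨x, hx⟩) 0)
    -- `R ζ = (K - ζ)⁻¹` for `Im ζ ≠ 0`:
    (R : ℂ → H →L[ℂ] H)
    (hR : ∀ ζ : ℂ, ζ.im ≠ 0 → ∀ x : H, ∃ h : R ζ x ∈ K.domain,
      K ⟨R ζ x, h⟩ - ζ • R ζ x = x)
    (hR' : ∀ ζ : ℂ, ζ.im ≠ 0 → ∀ x (hx : x ∈ K.domain),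
      R ζ (K ⟨x, hx⟩ - ζ • x) = x) :
    (∀ (σ : ℝ) (x : H),
        S (U σ x) = Complex.exp (2 * Real.pi * Complex.I * σ) • U σ (S x)) ↔
    (∀ ζ : ℂ, ζ.im ≠ 0 → ∀ x : H,
        S (R ζ x) = R (ζ + (2 * Real.pi : ℝ)) (S x)) :=
  stmt_3_general K hdense hself S U hU0 hUadd hUunit hUcont hUgen R hR hR'
end
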